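/- Let G be a digraph of order n with minimum in-degree at least 1, and let t = |{u : d⁻(u) = 1}|. If t = 0 then G has a directed cycle of length at most ⌈n/2⌉, and if t ≥ 1 then G has a directed cycle of length at most ⌈(n + t − 1)/2⌉. -/

import Mathlib

/-!
Keeping at most two in-arcs at every vertex does not change `t` and only removes cycles, so we
may assume all in-degrees are `1` or `2`, and prove `2 * m ≤ n + max t 1` for some cycle
length `m` by induction on `n`.

Call `v` deletable if no out-neighbour of `v` has in-degree `1`. Then `G - v` is again of this
kind, with `t' = t + d⁺(v) - [d⁻(v) = 1]`, so if `G` had no short enough cycle the induction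
hypothesis for `G - v` would force `d⁺(v) ≥ 2 + [d⁻(v) = 1]`, and even `d⁺(v) ≥ 3` when `t = 0`.
Arcs leaving deletable vertices end at one of the `n - t` vertices of in-degree `2`, while at most
`t` vertices are not deletable, so counting these arcs shows `t ≥ 1` and that every vertex of
in-degree `1` has an out-neighbour of in-degree `1`. Following such arcs gives a cycle of length at
most `t ≤ (n + t) / 2`.
-/

/-- A directed cycle of length `m` in the digraph with arc relation `A`. -/
def IsCycleOn {V : Type*} (A : V → V → Prop) (m : ℕ) (c : ZMod m → V) : Prop :=
  2 ≤ m ∧ Function.Injective c ∧ ∀ i, A (c i) (c (i + 1))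

open Finset Function
open scoped Classical

theorem IsCycleOn.map {V W : Type*} {A : V → V → Prop} {B : W → W → Prop} {m : ℕ}
    {c : ZMod m → V} (hc : IsCycleOn A m c) {g : V → W} (hg : Injective g)
    (hAB : ∀ a b, A a b → B (g a) (g b)) : IsCycleOn B m (g ∘ c) :=
  ⟨hc.1, hg.comp hc.2.1, fun i => hAB _ _ (hc.2.2 i)⟩

theorem Function.exists_mem_periodicPts {α : Type*} [Finite α] [Nonempty α] (f : α → α) :
    ∃ x, x ∈ periodicPts f := by
  obtain ⟨x⟩ := ‹Nonempty α›
  obtain ⟨m, n, heq, hlt⟩ : ∃ m n, f^[m] x = f^[n] x ∧ m < n := by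
    obtain ⟨m, n, heq, hne⟩ : ∃ m n, f^[m] x = f^[n] x ∧ m ≠ n := by
      simpa [Injective] using not_injective_infinite_finite (f^[·] x)
    rcases lt_or_gt_of_ne hne with hlt | hlt
    exacts [⟨m, n, heq, hlt⟩, ⟨n, m, heq.symm, hlt⟩]
  refine ⟨f^[m] x, mk_mem_periodicPts (n := n - m) (by lia) ?_⟩
  rw [IsPeriodicPt, IsFixedPt, ← iterate_add_apply, Nat.sub_add_cancel hlt.le, heq]

theorem Function.isCycleOn_periodicOrbit {α : Type*} {f : α → α} {x : α}
    (hx : x ∈ periodicPts f) (hfx : f x ≠ x) :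
    IsCycleOn (fun a b => f a = b) (minimalPeriod f x) (fun k => f^[k.val] x) := by
  have hpos := minimalPeriod_pos_of_mem_periodicPts hx
  have hne1 : minimalPeriod f x ≠ 1 := fun h => hfx (minimalPeriod_eq_one_iff_isFixedPt.mp h)
  have : NeZero (minimalPeriod f x) := ⟨hpos.ne'⟩
  refine ⟨by lia, fun k l hkl => ZMod.val_injective _ ?_, fun k => ?_⟩
  · exact iterate_injOn_Iio_minimalPeriod (ZMod.val_lt k) (ZMod.val_lt l) hkl
  · have hval : (k + 1).val = (k.val + 1) % minimalPeriod f x := by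
      rw [ZMod.val_add, ZMod.val_one_eq_one_mod, Nat.mod_eq_of_lt (by lia : 1 < _)]
    show f (f^[k.val] x) = f^[(k + 1).val] x
    rw [hval, iterate_mod_minimalPeriod_eq, iterate_succ_apply']

theorem exists_isCycleOn_le_card_of_forall_exists_adj {V : Type*} (A : V → V → Prop)
    (hloop : ∀ v, ¬ A v v) (s : Finset V) (hs : s.Nonempty) (hs_adj : ∀ v ∈ s, ∃ w ∈ s, A v w) :
    ∃ m c, IsCycleOn A m c ∧ m ≤ #s := by
  choose f hfs hf using hs_adj
  let g : s → s := fun v => ⟨f v v.2, hfs v v.2⟩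
  have : Nonempty s := hs.to_subtype
  obtain ⟨x, hx⟩ := exists_mem_periodicPts g
  have hgx : g x ≠ x := by
    intro h
    have hfx : f x x.2 = x := congrArg Subtype.val h
    exact hloop x (by simpa only [hfx] using hf x x.2)
  refine ⟨_, _, (isCycleOn_periodicOrbit hx hgx).map Subtype.val_injective ?_, ?_⟩
  · rintro a _ rfl
    exact hf a a.2
  · simpa using minimalPeriod_le_card (f := g) (x := x)

noncomputable section

variable {V : Type*} [Fintype V] (A : V → V → Prop)

def inNbrs (v : V) : Finset V := {u | A u v}

def outNbrs (v : V) : Finset V := {w | A v w}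

def inDeg (v : V) : ℕ := #(inNbrs A v)

def outDeg (v : V) : ℕ := #(outNbrs A v)

def inDegOneSet : Finset V := {v | inDeg A v = 1}

/-- When all in-degrees are positive, removing such a vertex keeps them positive. -/
def Deletable (v : V) : Prop := ∀ w, A v w → inDeg A w ≠ 1

def deleteVert (v : V) (a b : {x // x ≠ v}) : Prop := A a b

variable {A}

@[simp] theorem mem_inNbrs {u v : V} : u ∈ inNbrs A v ↔ A u v := by simp [inNbrs]

@[simp] theorem mem_outNbrs {v w : V} : w ∈ outNbrs A v ↔ A v w := by simp [outNbrs]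

@[simp] theorem mem_inDegOneSet {v : V} : v ∈ inDegOneSet A ↔ inDeg A v = 1 := by
  simp [inDegOneSet]

theorem natCard_adj_eq_inDeg (v : V) : Nat.card {u // A u v} = inDeg A v := by
  rw [Nat.card_eq_fintype_card, Fintype.card_subtype]
  rfl

variable (A) in
theorem exists_le_inDeg_eq_min (k : ℕ) :
    ∃ B : V → V → Prop, (∀ u v, B u v → A u v) ∧ ∀ v, inDeg B v = min (inDeg A v) k := by
  choose s hsA hs using fun v => exists_subset_card_eq (min_le_left (inDeg A v) k)
  refine ⟨fun u v => u ∈ s v, fun u v h => mem_inNbrs.mp (hsA v h), fun v => ?_⟩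
  rw [← hs v, inDeg]
  congr 1
  ext u
  simp

theorem sum_card_filter_adj (T : Finset V) :
    ∑ v, #{w ∈ T | A v w} = ∑ w ∈ T, inDeg A w :=
  sum_card_bipartiteAbove_eq_sum_card_bipartiteBelow A

theorem exists_outDeg_le [Nonempty V] {k : ℕ} (hk : ∀ v, inDeg A v ≤ k) :
    ∃ v, outDeg A v ≤ k := by
  have hsum : ∑ v, outDeg A v ≤ ∑ v, inDeg A v := (sum_card_filter_adj univ).le
  obtain ⟨v, -, hv⟩ := exists_le_of_sum_le univ_nonempty hsum
  exact ⟨v, hv.trans (hk v)⟩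

theorem card_not_deletable_le : #{v | ¬ Deletable A v} ≤ #(inDegOneSet A) := by
  refine card_le_card_of_forall_subsingleton A (fun v hv => ?_) fun w hw => ?_
  · simpa [Deletable, and_comm] using hv
  · obtain ⟨u, hu⟩ := card_eq_one.mp (mem_inDegOneSet.mp hw)
    refine (Set.subsingleton_singleton (a := u)).anti fun a ha => ?_
    rw [Set.mem_singleton_iff, ← mem_singleton, ← hu, mem_inNbrs]
    exact ha.2

theorem sum_outDeg_deletable_le (hd2 : ∀ v, inDeg A v ≤ 2) :
    ∑ v ∈ {v | Deletable A v}, outDeg A v ≤ 2 * #(inDegOneSet A)ᶜ := by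
  calc ∑ v ∈ {v | Deletable A v}, outDeg A v
      = ∑ v ∈ {v | Deletable A v}, #{w ∈ (inDegOneSet A)ᶜ | A v w} := by
        refine sum_congr rfl fun v hv => congrArg card ?_
        ext w
        simp only [mem_outNbrs, mem_filter, mem_compl, mem_inDegOneSet]
        exact ⟨fun h => ⟨(mem_filter.mp hv).2 w h, h⟩, And.right⟩
    _ ≤ ∑ v, #{w ∈ (inDegOneSet A)ᶜ | A v w} := sum_le_sum_of_subset (subset_univ _)
    _ = ∑ w ∈ (inDegOneSet A)ᶜ, inDeg A w := sum_card_filter_adj _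
    _ ≤ 2 * #(inDegOneSet A)ᶜ := by
        rw [mul_comm]
        exact sum_le_card_nsmul _ _ _ fun w _ => hd2 w

theorem not_deletable_of_mem_inDegOneSet (hd2 : ∀ v, inDeg A v ≤ 2)
    (h : ∀ v, Deletable A v → 2 + (if v ∈ inDegOneSet A then 1 else 0) ≤ outDeg A v) :
    ∀ v ∈ inDegOneSet A, ¬ Deletable A v := by
  set D := inDegOneSet A
  set R : Finset V := {v | Deletable A v}
  have hsum : ∑ v ∈ R, (2 + if v ∈ D then 1 else 0) = 2 * #R + #{v ∈ R | v ∈ D} := by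
    rw [sum_add_distrib, sum_const, smul_eq_mul, mul_comm, sum_boole, Nat.cast_id]
  have hle : ∑ v ∈ R, (2 + if v ∈ D then 1 else 0) ≤ 2 * #Dᶜ :=
    (sum_le_sum fun v hv => h v (mem_filter.mp hv).2).trans (sum_outDeg_deletable_le hd2)
  have hR : #Dᶜ ≤ #R := by
    have h₁ : #{v | ¬ Deletable A v} ≤ #D := card_not_deletable_le
    have h₂ : #R + #{v | ¬ Deletable A v} = #(univ : Finset V) :=
      card_filter_add_card_filter_not _
    rw [card_compl, ← card_univ]
    omega
  have hempty : #{v ∈ R | v ∈ D} = 0 := by omega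
  intro v hv hdel
  exact notMem_empty v
    (card_eq_zero.mp hempty ▸ mem_filter.mpr ⟨mem_filter.mpr ⟨mem_univ v, hdel⟩, hv⟩)

theorem inDeg_deleteVert_add {v : V} (y : {x // x ≠ v}) :
    inDeg (deleteVert A v) y + (if A v y then 1 else 0) = inDeg A y := by
  have hmap : (inNbrs (deleteVert A v) y).map (Embedding.subtype _) = (inNbrs A y).erase v := by
    ext u
    simp [deleteVert, and_comm]
  rw [inDeg, ← card_map, hmap, inDeg, card_erase_eq_ite]
  by_cases h : A v y
  · simp [h, Nat.sub_add_cancel (card_pos.mpr ⟨v, mem_inNbrs.mpr h⟩)]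
  · simp [h]

theorem inDeg_deleteVert_le {v : V} (y : {x // x ≠ v}) : inDeg (deleteVert A v) y ≤ inDeg A y :=
  (inDeg_deleteVert_add y).symm ▸ Nat.le_add_right _ _

namespace Deletable

variable {v : V} (hd1 : ∀ w, 1 ≤ inDeg A w) (hv : Deletable A v)
include hd1 hv

theorem one_le_inDeg_deleteVert (y : {x // x ≠ v}) : 1 ≤ inDeg (deleteVert A v) y := by
  have hadd := inDeg_deleteVert_add (A := A) y
  have := hd1 y
  by_cases h : A v y
  · rw [if_pos h] at hadd
    have := hv y h
    omega
  · rw [if_neg h] at hadd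
    omega

theorem inDeg_deleteVert_eq_one_iff (hd2 : ∀ w, inDeg A w ≤ 2) (y : {x // x ≠ v}) :
    inDeg (deleteVert A v) y = 1 ↔ A v y ∨ inDeg A y = 1 := by
  have hadd := inDeg_deleteVert_add (A := A) y
  have := hd1 y
  have := hd2 y
  by_cases h : A v y
  · rw [if_pos h] at hadd
    have := hv y h
    simp only [h, true_or, iff_true]
    omega
  · rw [if_neg h] at hadd
    simp only [h, false_or]
    omega

theorem card_inDegOneSet_deleteVert (hloop : ∀ w, ¬ A w w) (hd2 : ∀ w, inDeg A w ≤ 2) :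
    #(inDegOneSet (deleteVert A v)) + (if v ∈ inDegOneSet A then 1 else 0) =
      outDeg A v + #(inDegOneSet A) := by
  have hmap : (inDegOneSet (deleteVert A v)).map (Embedding.subtype _) =
      outNbrs A v ∪ (inDegOneSet A).erase v := by
    ext w
    simp only [mem_map, mem_inDegOneSet, Embedding.coe_subtype, mem_union, mem_outNbrs,
      mem_erase]
    constructor
    · rintro ⟨y, hy, rfl⟩
      exact ((inDeg_deleteVert_eq_one_iff hd1 hv hd2 y).mp hy).imp_right fun h => ⟨y.2, h⟩
    · intro h
      have hw : w ≠ v := by rintro rfl; exact h.elim (hloop w) fun h => h.1 rfl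
      exact ⟨⟨w, hw⟩, (inDeg_deleteVert_eq_one_iff hd1 hv hd2 _).mpr (by tauto), rfl⟩
  have hdisj : Disjoint (outNbrs A v) ((inDegOneSet A).erase v) :=
    disjoint_left.mpr fun w hw hw' =>
      hv w (mem_outNbrs.mp hw) (mem_inDegOneSet.mp (mem_of_mem_erase hw'))
  rw [← card_map, hmap, card_union_of_disjoint hdisj, outDeg, card_erase_eq_ite]
  split_ifs with h
  · have := card_pos.mpr ⟨v, h⟩
    omega
  · rfl

end Deletable

theorem exists_isCycleOn_two_mul_le [Nonempty V] (hloop : ∀ v, ¬ A v v)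
    (hd1 : ∀ v, 1 ≤ inDeg A v) (hd2 : ∀ v, inDeg A v ≤ 2) :
    ∃ m c, IsCycleOn A m c ∧ 2 * m ≤ Fintype.card V + max #(inDegOneSet A) 1 := by
  induction hn : Fintype.card V using Nat.strong_induction_on generalizing V with
  | _ n ih =>
  by_contra! hno
  set t := #(inDegOneSet A)
  have htn : t ≤ n := hn ▸ card_le_univ _
  have hn0 : 0 < n := hn ▸ Fintype.card_pos
  have key (v : V) (hv : Deletable A v) :
      max t 1 + 2 + (if v ∈ inDegOneSet A then 1 else 0) ≤ outDeg A v + t := by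
    obtain ⟨u, hu⟩ : (inNbrs A v).Nonempty := card_pos.mp (hd1 v)
    have : Nonempty {x // x ≠ v} := ⟨⟨u, by rintro rfl; exact hloop u (mem_inNbrs.mp hu)⟩⟩
    have hcard : Fintype.card {x // x ≠ v} = n - 1 := by simp [hn]
    obtain ⟨m, c, hc, hm⟩ := ih (n - 1) (by omega) (A := deleteVert A v) (fun y => hloop y)
      (hv.one_le_inDeg_deleteVert hd1) (fun y => (inDeg_deleteVert_le y).trans (hd2 y)) hcard
    have := hno m _ (hc.map Subtype.val_injective fun _ _ h => h)
    have := hv.card_inDegOneSet_deleteVert hd1 hloop hd2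
    omega
  rcases Nat.eq_zero_or_pos t with ht | ht
  · obtain ⟨v, hv⟩ := exists_outDeg_le hd2
    have hdel : Deletable A v := fun w _ hw =>
      notMem_empty w (card_eq_zero.mp ht ▸ mem_inDegOneSet.mpr hw)
    have := key v hdel
    split_ifs at this <;> omega
  · have hD : ∀ v ∈ inDegOneSet A, ¬ Deletable A v :=
      not_deletable_of_mem_inDegOneSet hd2 fun v hv => by
        have := key v hv
        split_ifs at this ⊢ <;> omega
    obtain ⟨m, c, hc, hm⟩ := exists_isCycleOn_le_card_of_forall_exists_adj A hloop _
      (card_pos.mp ht) fun v hv => by simpa [Deletable, and_comm] using hD v hv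
    have := hno m c hc
    omega

end

/-- The in-degree version of Shen's theorem (obtained by reversing all arcs):
in a loopless digraph of order `n` with minimum in-degree at least `1`, if
`t = |{u : d⁻(u) = 1}|` then there is a directed cycle of length at most `⌈n/2⌉`
when `t = 0`, and of length at most `⌈(n + t - 1)/2⌉` when `t ≥ 1`. -/
theorem stmt_7 {V : Type*} [Fintype V] [Nonempty V] (A : V → V → Prop)
    (hloop : ∀ v, ¬ A v v)
    (hdeg : ∀ v : V, 1 ≤ Nat.card {u : V // A u v})
    (t : ℕ) (ht : t = Nat.card {u : V // Nat.card {w : V // A w u} = 1}) :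
    (t = 0 → ∃ (m : ℕ) (c : ZMod m → V), IsCycleOn A m c ∧
        m ≤ (Fintype.card V + 1) / 2) ∧
    (1 ≤ t → ∃ (m : ℕ) (c : ZMod m → V), IsCycleOn A m c ∧
        m ≤ ((Fintype.card V + t - 1) + 1) / 2) := by
  simp only [natCard_adj_eq_inDeg] at hdeg ht
  obtain ⟨B, hBA, hB⟩ := exists_le_inDeg_eq_min A 2
  have htB : #(inDegOneSet B) = t := by
    rw [ht, Nat.card_eq_fintype_card, Fintype.card_subtype]
    congr 1
    ext v
    have := hdeg v
    simp only [mem_inDegOneSet, mem_filter, mem_univ, true_and, hB]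
    omega
  obtain ⟨m, c, hc, hm⟩ := exists_isCycleOn_two_mul_le (A := B) (fun v h => hloop v (hBA v v h))
    (fun v => hB v ▸ le_min (hdeg v) one_le_two) (fun v => hB v ▸ min_le_right _ _)
  have hcA : IsCycleOn A m c := hc.map injective_id hBA
  rw [htB] at hm
  exact ⟨fun _ => ⟨m, c, hcA, by omega⟩, fun _ => ⟨m, c, hcA, by omega⟩⟩
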